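/- Let d ≥ 3 and let C_0, C_d', C_{d+1}' be positive constants. Let h : ℝ^d \ {0} → ℂ be a measurable function satisfying |h(x)| ≤ C_0 |x|^{−(d−1)} for all x ≠ 0, and let ψ : ℝ^d → ℂ be a measurable function satisfying |ψ(x)| ≤ C_0 for all x, |ψ(x)| ≤ C_d'|x|^{−d} and |ψ(x)| ≤ C_{d+1}'|x|^{−(d+1)} for |x| ≥ 1. Then there exists a constant C, depending only on d and the above constants, such that for all x_0 ∈ ℝ^d with |x_0| ≥ 2, | ∫_{ℝ^d} h(x − x_0) ψ(x) dx | ≤ C/|x_0|^{d−1}. -/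

import Mathlib

/-!
Split the integral at `‖x - x₀‖ = ‖x₀‖ / 2`. Near `x₀` we have `‖x‖ ≥ ‖x₀‖ / 2`, so
`|ψ x| ≲ ‖x₀‖^(-d)`, while in polar coordinates `∫_{‖y‖ ≤ r} ‖y‖^(1-d) dy = d |B₁| r` with
`r = ‖x₀‖ / 2`; this gives `‖x₀‖^(1-d)`. Away from `x₀` we have `|h (x - x₀)| ≲ ‖x₀‖^(1-d)`,
and `ψ` is dominated by the integrable function `(1 + ‖x‖)^(-(d+1))`.
-/

open MeasureTheory Metric Set Module

lemma pow_mul_indicator_Iic_inv_pow {n : ℕ} {r y : ℝ} (hy : 0 < y) :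
    y ^ n • (Iic r).indicator (fun t => (t ^ n)⁻¹) y = (Iic r).indicator 1 y := by
  by_cases hyr : y ≤ r <;> simp [hyr, hy.ne']

lemma norm_le_two_pow_mul_inv_one_add_norm_pow {X F : Type*} [SeminormedAddGroup X]
    [SeminormedAddGroup F] {ψ : X → F} {b c : ℝ} {p : ℕ} (hb : 0 ≤ b) (hc : 0 ≤ c)
    (hψ : ∀ x, ‖ψ x‖ ≤ b) (hψ_decay : ∀ x, 1 ≤ ‖x‖ → ‖ψ x‖ ≤ c / ‖x‖ ^ p) (x : X) :
    ‖ψ x‖ ≤ 2 ^ p * (b + c) * ((1 + ‖x‖) ^ p)⁻¹ := by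
  rw [← div_eq_mul_inv, le_div_iff₀ (by positivity)]
  rcases le_or_gt 1 ‖x‖ with hx | hx
  · calc ‖ψ x‖ * (1 + ‖x‖) ^ p ≤ c / ‖x‖ ^ p * (2 * ‖x‖) ^ p := by
          gcongr
          exacts [hψ_decay x hx, by linarith]
      _ = 2 ^ p * c := by rw [mul_pow]; field_simp
      _ ≤ 2 ^ p * (b + c) := by gcongr; linarith
  · calc ‖ψ x‖ * (1 + ‖x‖) ^ p ≤ b * 2 ^ p := by
          gcongr
          exacts [hψ x, by linarith]
      _ ≤ 2 ^ p * (b + c) := by rw [mul_comm]; gcongr; linarith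

lemma norm_mul_le_near_add_far {X 𝕜 : Type*} [NormedAddCommGroup X] [NormedRing 𝕜]
    {h ψ : X → 𝕜} {g : X → ℝ} {a c r : ℝ} {p q : ℕ} (ha : 0 ≤ a) (hc : 0 ≤ c)
    (hh : ∀ y, y ≠ 0 → ‖h y‖ ≤ a / ‖y‖ ^ q) (hψ : ∀ x, ‖ψ x‖ ≤ g x)
    (hψ_decay : ∀ x, 1 ≤ ‖x‖ → ‖ψ x‖ ≤ c / ‖x‖ ^ p)
    {x₀ x : X} (hr : 1 ≤ r) (hx₀ : 2 * r ≤ ‖x₀‖) (hx : x ≠ x₀) :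
    ‖h (x - x₀) * ψ x‖ ≤
      a * c / r ^ p * (Iic r).indicator (fun t => (t ^ q)⁻¹) ‖x - x₀‖ + a / r ^ q * g x := by
  have hy : x - x₀ ≠ 0 := sub_ne_zero.2 hx
  have hg : 0 ≤ g x := (norm_nonneg _).trans (hψ x)
  refine (norm_mul_le _ _).trans ?_
  rcases le_or_gt ‖x - x₀‖ r with hnear | hfar
  · have hxr : r ≤ ‖x‖ := by linarith [norm_sub_norm_le x₀ x, norm_sub_rev x₀ x]
    have hψr : ‖ψ x‖ ≤ c / r ^ p := (hψ_decay x (hr.trans hxr)).trans (by gcongr)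
    calc ‖h (x - x₀)‖ * ‖ψ x‖ ≤ a / ‖x - x₀‖ ^ q * (c / r ^ p) :=
          mul_le_mul (hh _ hy) hψr (norm_nonneg _) (by positivity)
      _ = a * c / r ^ p * (Iic r).indicator (fun t => (t ^ q)⁻¹) ‖x - x₀‖ := by
          rw [indicator_of_mem (mem_Iic.2 hnear)]; ring
      _ ≤ _ := le_add_of_nonneg_right (by positivity)
  · have hhr : ‖h (x - x₀)‖ ≤ a / r ^ q := (hh _ hy).trans (by gcongr)
    calc ‖h (x - x₀)‖ * ‖ψ x‖ ≤ a / r ^ q * g x :=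
          mul_le_mul hhr (hψ x) (norm_nonneg _) (by positivity)
      _ ≤ _ := le_add_of_nonneg_left
          (mul_nonneg (by positivity) (indicator_apply_nonneg fun _ => by positivity))

section

variable {E : Type*} [NormedAddCommGroup E] [NormedSpace ℝ E] [FiniteDimensional ℝ E]
  [MeasurableSpace E] [BorelSpace E] (μ : Measure E) [μ.IsAddHaarMeasure]

lemma integrable_indicator_Iic_inv_pow_norm [Nontrivial E] (r : ℝ) :
    Integrable (fun x : E => (Iic r).indicator (fun t => (t ^ (finrank ℝ E - 1))⁻¹) ‖x‖) μ := by
  rw [integrable_fun_norm_addHaar,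
    integrableOn_congr_fun (fun y (hy : y ∈ Ioi 0) => pow_mul_indicator_Iic_inv_pow hy)
      measurableSet_Ioi,
    IntegrableOn, integrable_indicator_iff measurableSet_Iic, IntegrableOn,
    Measure.restrict_restrict measurableSet_Iic, Iic_inter_Ioi]
  exact integrableOn_const measure_Ioc_lt_top.ne

lemma integral_indicator_Iic_inv_pow_norm [Nontrivial E] {r : ℝ} (hr : 0 ≤ r) :
    ∫ x, (Iic r).indicator (fun t => (t ^ (finrank ℝ E - 1))⁻¹) ‖x‖ ∂μ =
      finrank ℝ E * μ.real (ball 0 1) * r := by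
  rw [integral_fun_norm_addHaar,
    setIntegral_congr_fun measurableSet_Ioi (fun y hy => pow_mul_indicator_Iic_inv_pow hy),
    setIntegral_indicator measurableSet_Iic, Ioi_inter_Iic]
  simp [Real.volume_real_Ioc_of_le hr, mul_assoc]

lemma integrable_inv_one_add_norm_pow {p : ℕ} (hp : finrank ℝ E < p) :
    Integrable (fun x : E => ((1 + ‖x‖) ^ p)⁻¹) μ := by
  refine (integrable_one_add_norm (r := p) (by exact_mod_cast hp)).congr (.of_forall fun x => ?_)
  simp [Real.rpow_neg (by positivity : (0:ℝ) ≤ 1 + ‖x‖)]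

variable {𝕜 : Type*} [NormedRing 𝕜] [NormedSpace ℝ 𝕜] {h ψ : E → 𝕜}

lemma norm_integral_mul_sub_le {g : E → ℝ} {a c r : ℝ} (ha : 0 ≤ a) (hc : 0 ≤ c)
    (hh : ∀ y, y ≠ 0 → ‖h y‖ ≤ a / ‖y‖ ^ (finrank ℝ E - 1)) (hψ : ∀ x, ‖ψ x‖ ≤ g x)
    (hg : Integrable g μ) (hψ_decay : ∀ x, 1 ≤ ‖x‖ → ‖ψ x‖ ≤ c / ‖x‖ ^ finrank ℝ E)
    {x₀ : E} (hr : 1 ≤ r) (hx₀ : 2 * r ≤ ‖x₀‖) :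
    ‖∫ x, h (x - x₀) * ψ x ∂μ‖ ≤
      a * (c * (finrank ℝ E * μ.real (ball 0 1)) + ∫ x, g x ∂μ) / r ^ (finrank ℝ E - 1) := by
  have : Nontrivial E := nontrivial_of_ne x₀ 0 (norm_pos_iff.1 (by linarith))
  set n := finrank ℝ E
  set k : E → ℝ := fun y => (Iic r).indicator (fun t => (t ^ (n - 1))⁻¹) ‖y‖
  have hk : Integrable (fun x => k (x - x₀)) μ :=
    (integrable_indicator_Iic_inv_pow_norm μ r).comp_sub_right x₀
  calc ‖∫ x, h (x - x₀) * ψ x ∂μ‖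
      ≤ ∫ x, (a * c / r ^ n * k (x - x₀) + a / r ^ (n - 1) * g x) ∂μ :=
        norm_integral_le_of_norm_le ((hk.const_mul _).add (hg.const_mul _))
          ((μ.ae_ne x₀).mono fun x hx => norm_mul_le_near_add_far ha hc hh hψ hψ_decay hr hx₀ hx)
    _ = a * c / r ^ n * (n * μ.real (ball 0 1) * r) + a / r ^ (n - 1) * ∫ x, g x ∂μ := by
        rw [integral_add (hk.const_mul _) (hg.const_mul _), integral_const_mul,
          integral_sub_right_eq_self k x₀, integral_indicator_Iic_inv_pow_norm μ (by linarith),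
          integral_const_mul]
    _ = _ := by
        obtain ⟨m, hm⟩ : ∃ m, n = m + 1 := Nat.exists_eq_succ_of_ne_zero finrank_pos.ne'
        rw [hm, Nat.add_sub_cancel, pow_succ]
        field_simp

theorem exists_norm_integral_mul_sub_le {a b c c' : ℝ} (ha : 0 ≤ a) (hb : 0 ≤ b) (hc : 0 ≤ c)
    (hc' : 0 ≤ c') (hh : ∀ y, y ≠ 0 → ‖h y‖ ≤ a / ‖y‖ ^ (finrank ℝ E - 1)) (hψ : ∀ x, ‖ψ x‖ ≤ b)
    (hψ_decay : ∀ x, 1 ≤ ‖x‖ → ‖ψ x‖ ≤ c / ‖x‖ ^ finrank ℝ E)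
    (hψ_decay' : ∀ x, 1 ≤ ‖x‖ → ‖ψ x‖ ≤ c' / ‖x‖ ^ (finrank ℝ E + 1)) :
    ∃ C, ∀ x₀ : E, 2 ≤ ‖x₀‖ → ‖∫ x, h (x - x₀) * ψ x ∂μ‖ ≤ C / ‖x₀‖ ^ (finrank ℝ E - 1) := by
  set n := finrank ℝ E
  set g : E → ℝ := fun x => 2 ^ (n + 1) * (b + c') * ((1 + ‖x‖) ^ (n + 1))⁻¹
  refine ⟨2 ^ (n - 1) * (a * (c * (n * μ.real (ball 0 1)) + ∫ x, g x ∂μ)), fun x₀ hx₀ => ?_⟩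
  refine (norm_integral_mul_sub_le μ ha hc hh
    (norm_le_two_pow_mul_inv_one_add_norm_pow hb hc' hψ hψ_decay')
    ((integrable_inv_one_add_norm_pow μ n.lt_succ_self).const_mul _) hψ_decay
    (r := ‖x₀‖ / 2) (by linarith) (by linarith)).trans_eq ?_
  rw [div_pow, div_div_eq_mul_div]
  ring

end

theorem convolution_decay_estimate_general
    (d : ℕ) (C₀ Cd' Cd1' : ℝ)
    (hC₀ : 0 < C₀) (hCd' : 0 < Cd') (hCd1' : 0 < Cd1')
    (h ψ : EuclideanSpace ℝ (Fin d) → ℂ)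
    (hh_bound : ∀ x : EuclideanSpace ℝ (Fin d), x ≠ 0 → ‖h x‖ ≤ C₀ / ‖x‖ ^ (d - 1))
    (hψ_bound : ∀ x : EuclideanSpace ℝ (Fin d), ‖ψ x‖ ≤ C₀)
    (hψ_decay_d : ∀ x : EuclideanSpace ℝ (Fin d), 1 ≤ ‖x‖ → ‖ψ x‖ ≤ Cd' / ‖x‖ ^ d)
    (hψ_decay_d1 : ∀ x : EuclideanSpace ℝ (Fin d), 1 ≤ ‖x‖ → ‖ψ x‖ ≤ Cd1' / ‖x‖ ^ (d + 1)) :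
    ∃ C : ℝ, ∀ x₀ : EuclideanSpace ℝ (Fin d), 2 ≤ ‖x₀‖ →
      ‖∫ x, h (x - x₀) * ψ x‖ ≤ C / ‖x₀‖ ^ (d - 1) := by
  simpa only [finrank_euclideanSpace_fin] using
    exists_norm_integral_mul_sub_le volume hC₀.le hC₀.le hCd'.le hCd1'.le
      (by simpa only [finrank_euclideanSpace_fin] using hh_bound) hψ_bound
      (by simpa only [finrank_euclideanSpace_fin] using hψ_decay_d)
      (by simpa only [finrank_euclideanSpace_fin] using hψ_decay_d1)

/-- Convolution-type estimate: a kernel decaying like `|x|^{-(d-1)}`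
convolved with a bounded, rapidly decaying function decays like `|x₀|^{-(d-1)}`. -/
theorem convolution_decay_estimate
    (d : ℕ) (hd : 3 ≤ d) (C₀ Cd' Cd1' : ℝ)
    (hC₀ : 0 < C₀) (hCd' : 0 < Cd') (hCd1' : 0 < Cd1')
    (h ψ : EuclideanSpace ℝ (Fin d) → ℂ)
    (hh_meas : Measurable h) (hψ_meas : Measurable ψ)
    (hh_bound : ∀ x : EuclideanSpace ℝ (Fin d), x ≠ 0 → ‖h x‖ ≤ C₀ / ‖x‖ ^ (d - 1))
    (hψ_bound : ∀ x : EuclideanSpace ℝ (Fin d), ‖ψ x‖ ≤ C₀)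
    (hψ_decay_d : ∀ x : EuclideanSpace ℝ (Fin d), 1 ≤ ‖x‖ → ‖ψ x‖ ≤ Cd' / ‖x‖ ^ d)
    (hψ_decay_d1 : ∀ x : EuclideanSpace ℝ (Fin d), 1 ≤ ‖x‖ → ‖ψ x‖ ≤ Cd1' / ‖x‖ ^ (d + 1)) :
    ∃ C : ℝ, ∀ x₀ : EuclideanSpace ℝ (Fin d), 2 ≤ ‖x₀‖ →
      ‖∫ x, h (x - x₀) * ψ x‖ ≤ C / ‖x₀‖ ^ (d - 1) :=
  convolution_decay_estimate_general d C₀ Cd' Cd1' hC₀ hCd' hCd1' h ψ hh_bound hψ_bound hψ_decay_d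
    hψ_decay_d1
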